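/- If T is a well-founded tree (no infinite paths) whose root has rank β, then the grounding ordinal of the AF F_T is exactly β + 1. -/

import Mathlib

def defenseFn {A : Type*} (att : A → A → Prop) (S : Set A) : Set A :=
  {x | ∀ y, att y x → ∃ z ∈ S, att z y}

/-- `G` is the transfinite iteration of the defense function from `∅`. -/
def IsIter {A : Type*} (att : A → A → Prop) (G : Ordinal → Set A) : Prop :=
  G 0 = ∅ ∧ (∀ β : Ordinal, G (β + 1) = defenseFn att (G β)) ∧
    ∀ l : Ordinal, Order.IsSuccLimit l → G l = ⋃ β ∈ Set.Iio l, G β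

/-- `Gr` is the grounded extension: the least fixed point of the defense function. -/
def IsGrounded {A : Type*} (att : A → A → Prop) (Gr : Set A) : Prop :=
  defenseFn att Gr = Gr ∧ ∀ S, defenseFn att S = S → Gr ⊆ S

/-- A tree: a prefix-closed set of finite sequences of naturals. -/
def IsTree (T : Set (List ℕ)) : Prop := ∀ σ ∈ T, ∀ τ : List ℕ, τ <+: σ → τ ∈ T

/-- `RankLE T σ β` : `σ` is ranked in `T` with rank at most `β`
(every child of `σ` in `T` has rank strictly less than `β`). -/
inductive RankLE (T : Set (List ℕ)) : List ℕ → Ordinal → Prop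
  | intro (σ : List ℕ) (β : Ordinal) (g : ℕ → Ordinal)
      (hlt : ∀ n : ℕ, σ ++ [n] ∈ T → g n < β)
      (h : ∀ n : ℕ, σ ++ [n] ∈ T → RankLE T (σ ++ [n]) (g n)) : RankLE T σ β

/-- The AF `F_T` built from a tree `T`: arguments are `(false, σ)` (the `a_σ`'s)
and `(true, σ)` (the `b_σ`'s) for `σ ∈ T`; `b_σ` attacks `a_{σ⁻}` and `a_σ` attacks `b_σ`. -/
def ftAtt (T : Set (List ℕ)) : Bool × List ℕ → Bool × List ℕ → Prop := fun x y =>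
  (x.2 ∈ T ∧ x.1 = true ∧ y.1 = false ∧ x.2 ≠ [] ∧ y.2 = x.2.dropLast) ∨
  (x.2 ∈ T ∧ x.1 = false ∧ y.1 = true ∧ y.2 = x.2)

/-! The arguments `a_σ` are defended exactly along the well-founded tree: `a_σ` enters the
iteration at stage `γ + 1` as soon as every child `a_{σn}` is in stage `γ`, i.e. precisely when
`σ` has rank `≤ γ`, while no `b_σ` with `σ ∈ T` is ever defended, and arguments outside the tree are
unattacked. So stage `β + 1` already holds every argument that ever enters, hence is the grounded
extension, and the root argument `a_∅` is missing from every earlier stage by minimality of `β`. -/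

open Order

section Iteration

variable {A : Type*} {att : A → A → Prop} {G : Ordinal → Set A}

theorem defenseFn_mono (att : A → A → Prop) : Monotone (defenseFn att) :=
  fun _ _ h _ hx y hy => (hx y hy).imp fun _ ⟨hz, hzy⟩ => ⟨h hz, hzy⟩

namespace IsIter

theorem subset_of_lt_of_isSuccLimit (hG : IsIter att G) {o l : Ordinal} (hl : IsSuccLimit l)
    (ho : o < l) : G o ⊆ G l := by
  rw [hG.2.2 l hl]
  exact Set.subset_biUnion_of_mem (u := G) ho

theorem subset_add_one (hG : IsIter att G) (α : Ordinal) : G α ⊆ G (α + 1) := by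
  induction α using Ordinal.limitRecOn with
  | zero => simp [hG.1]
  | add_one o ih =>
    rw [hG.2.1 o, hG.2.1 (o + 1)]
    exact defenseFn_mono att ih
  | limit l hl ih =>
    intro x hx
    rw [hG.2.2 l hl] at hx
    obtain ⟨o, ho, hx⟩ := Set.mem_iUnion₂.mp hx
    have hsucc : G (o + 1) ⊆ G (l + 1) := by
      rw [hG.2.1, hG.2.1]
      exact defenseFn_mono att (hG.subset_of_lt_of_isSuccLimit hl ho)
    exact hsucc (ih o ho hx)

theorem monotone (hG : IsIter att G) : Monotone G := by
  intro γ δ hγδ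
  induction δ using Ordinal.limitRecOn with
  | zero => rw [nonpos_iff_eq_zero.mp hγδ]
  | add_one o ih =>
    rcases hγδ.lt_or_eq with hlt | rfl
    · exact (ih (Order.lt_add_one_iff.mp hlt)).trans (hG.subset_add_one o)
    · exact le_rfl
  | limit l hl _ =>
    rcases hγδ.lt_or_eq with hlt | rfl
    · exact hG.subset_of_lt_of_isSuccLimit hl hlt
    · exact le_rfl

theorem subset_of_isGrounded (hG : IsIter att G) {Gr : Set A} (hGr : IsGrounded att Gr)
    (α : Ordinal) : G α ⊆ Gr := by
  induction α using Ordinal.limitRecOn with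
  | zero => simp [hG.1]
  | add_one o ih =>
    rw [hG.2.1, ← hGr.1]
    exact defenseFn_mono att ih
  | limit l hl ih =>
    rw [hG.2.2 l hl]
    exact Set.iUnion₂_subset ih

theorem eq_of_add_one_subset (hG : IsIter att G) {Gr : Set A} (hGr : IsGrounded att Gr)
    {α : Ordinal} (h : G (α + 1) ⊆ G α) : G α = Gr := by
  have hfix : defenseFn att (G α) = G α := by
    rw [← hG.2.1]
    exact h.antisymm (hG.subset_add_one α)
  exact (hG.subset_of_isGrounded hGr α).antisymm (hGr.2 _ hfix)

end IsIter

end Iteration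

section TreeFramework

variable {T : Set (List ℕ)} {σ : List ℕ} {x : Bool × List ℕ}

theorem ftAtt_true_iff : ftAtt T x (true, σ) ↔ σ ∈ T ∧ x = (false, σ) := by
  obtain ⟨b, τ⟩ := x
  simp only [ftAtt, Bool.true_eq_false, false_and, and_false, false_or, true_and, Prod.mk.injEq]
  constructor
  · rintro ⟨hτ, rfl, rfl⟩
    exact ⟨hτ, rfl, rfl⟩
  · rintro ⟨hσ, rfl, rfl⟩
    exact ⟨hσ, rfl, rfl⟩

theorem ftAtt_false_iff : ftAtt T x (false, σ) ↔ ∃ n, σ ++ [n] ∈ T ∧ x = (true, σ ++ [n]) := by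
  obtain ⟨b, τ⟩ := x
  simp only [ftAtt, Bool.false_eq_true, false_and, and_false, or_false, true_and, Prod.mk.injEq]
  constructor
  · rintro ⟨hτ, rfl, hne, rfl⟩
    refine ⟨τ.getLast hne, ?_, rfl, ?_⟩ <;> rw [List.dropLast_append_getLast hne]
    exact hτ
  · rintro ⟨n, hσn, rfl, rfl⟩
    exact ⟨hσn, rfl, by simp, List.dropLast_concat.symm⟩

theorem not_ftAtt_of_notMem (hT : IsTree T) (hσ : σ ∉ T) (b : Bool) : ¬ ftAtt T x (b, σ) := by
  rintro (⟨hx, -, -, -, rfl⟩ | ⟨hx, -, -, rfl⟩)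
  · exact hσ (hT _ hx _ (List.dropLast_prefix _))
  · exact hσ hx

theorem mem_defenseFn_false_iff {S : Set (Bool × List ℕ)} :
    (false, σ) ∈ defenseFn (ftAtt T) S ↔ ∀ n, σ ++ [n] ∈ T → (false, σ ++ [n]) ∈ S := by
  constructor
  · intro h n hn
    obtain ⟨z, hz, hzatt⟩ := h _ (ftAtt_false_iff.mpr ⟨n, hn, rfl⟩)
    obtain ⟨-, rfl⟩ := ftAtt_true_iff.mp hzatt
    exact hz
  · intro h y hy
    obtain ⟨n, hn, rfl⟩ := ftAtt_false_iff.mp hy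
    exact ⟨_, h n hn, ftAtt_true_iff.mpr ⟨hn, rfl⟩⟩

theorem mem_defenseFn_true {S : Set (Bool × List ℕ)} (h : (true, σ) ∈ defenseFn (ftAtt T) S)
    (hσ : σ ∈ T) : ∃ n, σ ++ [n] ∈ T ∧ (true, σ ++ [n]) ∈ S := by
  obtain ⟨z, hz, hzσ⟩ := h (false, σ) (ftAtt_true_iff.mpr ⟨hσ, rfl⟩)
  obtain ⟨n, hn, rfl⟩ := ftAtt_false_iff.mp hzσ
  exact ⟨n, hn, hz⟩

theorem RankLE.mono {γ γ' : Ordinal} (h : RankLE T σ γ) (hle : γ ≤ γ') : RankLE T σ γ' := by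
  obtain ⟨_, _, g, hlt, hg⟩ := h
  exact .intro σ γ' g (fun n hn => (hlt n hn).trans_le hle) hg

theorem RankLE.child {γ : Ordinal} (h : RankLE T σ γ) {n : ℕ} (hn : σ ++ [n] ∈ T) :
    RankLE T (σ ++ [n]) γ := by
  obtain ⟨_, _, g, hlt, hg⟩ := h
  exact (hg n hn).mono (hlt n hn).le

theorem rankLE_of_mem (hT : IsTree T) {β : Ordinal} (hβ : RankLE T [] β) (hσ : σ ∈ T) :
    RankLE T σ β := by
  induction σ using List.reverseRecOn with
  | nil => exact hβ
  | append_singleton τ n ih => exact (ih (hT _ hσ τ (List.prefix_append τ [n]))).child hσ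

namespace IsIter

variable {G : Ordinal → Set (Bool × List ℕ)}

theorem true_notMem (hG : IsIter (ftAtt T) G) (α : Ordinal) (hσ : σ ∈ T) : (true, σ) ∉ G α := by
  induction α using Ordinal.limitRecOn generalizing σ with
  | zero => simp [hG.1]
  | add_one o ih =>
    intro h
    rw [hG.2.1] at h
    obtain ⟨n, hn, hmem⟩ := mem_defenseFn_true h hσ
    exact ih hn hmem
  | limit l hl ih =>
    intro h
    rw [hG.2.2 l hl] at h
    obtain ⟨o, ho, hmem⟩ := Set.mem_iUnion₂.mp h
    exact ih o ho hσ hmem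

theorem false_mem_of_rankLE (hG : IsIter (ftAtt T) G) {γ : Ordinal} (h : RankLE T σ γ) :
    (false, σ) ∈ G (γ + 1) := by
  induction h with
  | intro σ γ g hlt _ ih =>
    rw [hG.2.1, mem_defenseFn_false_iff]
    exact fun n hn => hG.monotone (Order.add_one_le_iff.mpr (hlt n hn)) (ih n hn)

theorem exists_rankLE_of_false_mem (hG : IsIter (ftAtt T) G) {α : Ordinal}
    (h : (false, σ) ∈ G α) : ∃ γ < α, RankLE T σ γ := by
  induction α using Ordinal.limitRecOn generalizing σ with
  | zero => simp [hG.1] at h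
  | add_one o ih =>
    rw [hG.2.1, mem_defenseFn_false_iff] at h
    choose! g hg hrank using fun n (hn : σ ++ [n] ∈ T) => ih (h n hn)
    exact ⟨o, Order.lt_add_one_iff.mpr le_rfl, .intro σ o _ hg hrank⟩
  | limit l hl ih =>
    rw [hG.2.2 l hl] at h
    obtain ⟨o, ho, hmem⟩ := Set.mem_iUnion₂.mp h
    obtain ⟨γ, hγ, hrank⟩ := ih o ho hmem
    exact ⟨γ, hγ.trans ho, hrank⟩

theorem mem_add_one_of_notMem (hT : IsTree T) (hG : IsIter (ftAtt T) G) (hσ : σ ∉ T) (b : Bool)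
    (α : Ordinal) : (b, σ) ∈ G (α + 1) := by
  rw [hG.2.1]
  exact fun y hy => absurd hy (not_ftAtt_of_notMem hT hσ b)

theorem subset_rank_add_one (hT : IsTree T) (hG : IsIter (ftAtt T) G) {β : Ordinal}
    (hβ : RankLE T [] β) (α : Ordinal) : G α ⊆ G (β + 1) := by
  rintro ⟨b, σ⟩ hx
  by_cases hσ : σ ∈ T
  · cases b
    · exact hG.false_mem_of_rankLE (rankLE_of_mem hT hβ hσ)
    · exact absurd hx (hG.true_notMem α hσ)
  · exact hG.mem_add_one_of_notMem hT hσ b β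

end IsIter

end TreeFramework

theorem ft_grounding_ordinal_general (T : Set (List ℕ)) (hT : IsTree T)
    (β : Ordinal) (hβ : RankLE T [] β) (hβmin : ∀ γ < β, ¬ RankLE T [] γ)
    (G : Ordinal → Set (Bool × List ℕ)) (hG : IsIter (ftAtt T) G)
    (Gr : Set (Bool × List ℕ)) (hGr : IsGrounded (ftAtt T) Gr) :
    G (β + 1) = Gr ∧ ∀ α : Ordinal, G α = Gr → β + 1 ≤ α := by
  have hβGr : G (β + 1) = Gr := hG.eq_of_add_one_subset hGr (hG.subset_rank_add_one hT hβ _)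
  refine ⟨hβGr, fun α hα => ?_⟩
  by_contra! hlt
  have hroot : (false, []) ∈ G α := hα ▸ hβGr ▸ hG.false_mem_of_rankLE hβ
  obtain ⟨γ, hγ, hγrank⟩ := hG.exists_rankLE_of_false_mem hroot
  exact hβmin γ (hγ.trans_le (Order.lt_add_one_iff.mp hlt)) hγrank

/-- If `T` is a well-founded tree whose root has rank exactly `β`, then the
grounding ordinal of `F_T` is exactly `β + 1`. -/
theorem ft_grounding_ordinal (T : Set (List ℕ)) (hT : IsTree T) (hroot : [] ∈ T)
    (hwf : ∀ σ ∈ T, ∃ γ : Ordinal, RankLE T σ γ)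
    (β : Ordinal) (hβ : RankLE T [] β) (hβmin : ∀ γ < β, ¬ RankLE T [] γ)
    (G : Ordinal → Set (Bool × List ℕ)) (hG : IsIter (ftAtt T) G)
    (Gr : Set (Bool × List ℕ)) (hGr : IsGrounded (ftAtt T) Gr) :
    G (β + 1) = Gr ∧ ∀ α : Ordinal, G α = Gr → β + 1 ≤ α :=
  ft_grounding_ordinal_general T hT β hβ hβmin G hG Gr hGr
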